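/- arXiv:2206.14490 — 6 statements merged into one kernel-verified Lean document; each statement's English description precedes it below -/
import Mathlib

section
/- (Affine invariance, P1.) Let Γ be a compact convex random set, M a non-singular p×p real matrix, and K, L ∈ K_c(ℝ^p). Then D_CT(M·K + L; M·Γ + L) = D_CT(K;Γ), where M·Γ + L denotes the compact convex random set ω ↦ M·Γ(ω) + L. -/
open MeasureTheory Metric Filter Topology TopologicalSpace Matrix
open scoped Pointwise ENNReal

/-- Support function of a set in a real inner product space. -/
noncomputable def supportFn {E : Type*} [NormedAddCommGroup E] [InnerProductSpace ℝ E]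
    (K : Set E) (u : E) : ℝ :=
  sSup ((fun k => (inner ℝ k u : ℝ)) '' K)

/-- Tukey depth of a set `K` with respect to the set-valued map `Γ` under `P`. -/
noncomputable def DCT {Ω : Type*} [MeasurableSpace Ω] {E : Type*}
    [NormedAddCommGroup E] [InnerProductSpace ℝ E]
    (P : Measure Ω) (Γ : Ω → Set E) (K : Set E) : ℝ :=
  min (⨅ u : sphere (0 : E) 1, (P {ω | supportFn (Γ ω) (u : E) ≤ supportFn K (u : E)}).toReal)
      (⨅ u : sphere (0 : E) 1, (P {ω | supportFn K (u : E) ≤ supportFn (Γ ω) (u : E)}).toReal)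

/-- Borel measurable structure on nonempty compact subsets with the Hausdorff metric. -/
noncomputable instance {E : Type*} [MetricSpace E] :
    MeasurableSpace (NonemptyCompacts E) := borel _

section Helpers

variable {E : Type*} [NormedAddCommGroup E] [InnerProductSpace ℝ E]

private lemma supportFn_add' (A B : Set E) (hA : A.Nonempty) (hAc : IsCompact A)
    (hB : B.Nonempty) (hBc : IsCompact B) (u : E) :
    supportFn (A + B) u = supportFn A u + supportFn B u := by
  have hcont : Continuous fun k : E => (inner ℝ k u : ℝ) := continuous_id.inner continuous_const
  have himg : (fun k : E => (inner ℝ k u : ℝ)) '' (A + B)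
      = (fun k : E => (inner ℝ k u : ℝ)) '' A + (fun k : E => (inner ℝ k u : ℝ)) '' B := by
    have h : (fun k : E => (inner ℝ k u : ℝ)) = fun k => (innerSL ℝ u) k := by
      funext k; rw [innerSL_apply_apply]; exact real_inner_comm u k
    rw [h]; exact Set.image_add (innerSL ℝ u)
  unfold supportFn
  rw [himg]
  exact csSup_add (hA.image _) ((hAc.image hcont).bddAbove) (hB.image _)
    ((hBc.image hcont).bddAbove)

private lemma supportFn_image' (T S : E →ₗ[ℝ] E)
    (hTS : ∀ x y : E, (inner ℝ (T x) y : ℝ) = inner ℝ x (S y)) (A : Set E) (u : E) :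
    supportFn (T '' A) u = supportFn A (S u) := by
  have h : ((fun k : E => (inner ℝ k u : ℝ)) ∘ T) = fun k : E => (inner ℝ k (S u) : ℝ) :=
    funext fun k => hTS k u
  simp only [supportFn, ← Set.image_comp, h]

private lemma supportFn_smul_pos (A : Set E) (hA : A.Nonempty) (hAc : IsCompact A)
    {c : ℝ} (hc : 0 < c) (u : E) :
    supportFn A (c • u) = c * supportFn A u := by
  have hcont : Continuous fun k : E => (inner ℝ k u : ℝ) := continuous_id.inner continuous_const
  have h1 : (fun k : E => (inner ℝ k (c • u) : ℝ)) = fun k : E => c * (inner ℝ k u : ℝ) := by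
    funext k; exact real_inner_smul_right k u c
  have h2 : (fun k : E => c * (inner ℝ k u : ℝ)) '' A
      = (fun x : ℝ => c * x) '' ((fun k : E => (inner ℝ k u : ℝ)) '' A) := by
    rw [← Set.image_comp]; rfl
  simp only [supportFn, h1, h2]
  exact ((OrderIso.mulLeft₀ c hc).map_csSup' (hA.image _) ((hAc.image hcont).bddAbove)).symm

private lemma supportFn_le_normalize_iff (A B : Set E) (hA : A.Nonempty) (hAc : IsCompact A)
    (hB : B.Nonempty) (hBc : IsCompact B) {v : E} (hv : v ≠ 0) :
    supportFn A v ≤ supportFn B v ↔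
      supportFn A (‖v‖⁻¹ • v) ≤ supportFn B (‖v‖⁻¹ • v) := by
  have hc : (0 : ℝ) < ‖v‖⁻¹ := inv_pos.2 (norm_pos_iff.2 hv)
  rw [supportFn_smul_pos A hA hAc hc v, supportFn_smul_pos B hB hBc hc v]
  exact (mul_le_mul_iff_right₀ hc).symm

/-- Abstract affine invariance of `DCT` under an injective linear map plus a translation set. -/
private lemma DCT_map_add {Ω : Type*} [MeasurableSpace Ω] (P : Measure Ω)
    [FiniteDimensional ℝ E]
    (Γ : Ω → Set E) (hΓne : ∀ ω, (Γ ω).Nonempty) (hΓc : ∀ ω, IsCompact (Γ ω))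
    (T S : E →ₗ[ℝ] E)
    (hTS : ∀ x y : E, (inner ℝ (T x) y : ℝ) = inner ℝ x (S y))
    (hSinj : Function.Injective S)
    (K L : Set E) (hKne : K.Nonempty) (hKcomp : IsCompact K)
    (hLne : L.Nonempty) (hLcomp : IsCompact L) :
    DCT P (fun ω => T '' Γ ω + L) (T '' K + L) = DCT P Γ K := by
  have hTcont : Continuous T := T.continuous_of_finiteDimensional
  have hSsurj : Function.Surjective S := LinearMap.injective_iff_surjective.1 hSinj
  have hSne : ∀ u : sphere (0 : E) 1, S (u : E) ≠ 0 := by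
    intro u h
    have h0 : (u : E) = 0 := hSinj (by simpa using h)
    have := mem_sphere_zero_iff_norm.1 u.2
    rw [h0, norm_zero] at this
    norm_num at this
  set e : sphere (0 : E) 1 → sphere (0 : E) 1 := fun u =>
    ⟨‖S (u : E)‖⁻¹ • S (u : E),
      mem_sphere_zero_iff_norm.2 (norm_smul_inv_norm (hSne u))⟩ with he
  have hesurj : Function.Surjective e := by
    intro v
    obtain ⟨w, hw⟩ := hSsurj (v : E)
    have hv1 : ‖(v : E)‖ = 1 := mem_sphere_zero_iff_norm.1 v.2
    have hvne : (v : E) ≠ 0 := fun h => by rw [h, norm_zero] at hv1; norm_num at hv1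
    have hwne : w ≠ 0 := fun h => hvne (by rw [← hw, h, map_zero])
    have hwn : (0 : ℝ) < ‖w‖ := norm_pos_iff.2 hwne
    refine ⟨⟨‖w‖⁻¹ • w, mem_sphere_zero_iff_norm.2 (norm_smul_inv_norm hwne)⟩, ?_⟩
    have hSu : S (‖w‖⁻¹ • w) = ‖w‖⁻¹ • (v : E) := by rw [LinearMap.map_smul, hw]
    have hnSu : ‖S (‖w‖⁻¹ • w)‖ = ‖w‖⁻¹ := by
      rw [hSu, norm_smul, hv1, norm_inv, norm_norm, mul_one]
    apply Subtype.ext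
    show ‖S (‖w‖⁻¹ • w)‖⁻¹ • S (‖w‖⁻¹ • w) = (v : E)
    rw [hnSu, hSu, inv_inv, smul_smul, mul_inv_cancel₀ hwn.ne', one_smul]
  have hkey : ∀ (A B : Set E), A.Nonempty → IsCompact A → B.Nonempty → IsCompact B →
      ∀ u : sphere (0 : E) 1,
      (supportFn (T '' A + L) (u : E) ≤ supportFn (T '' B + L) (u : E) ↔
        supportFn A ((e u : sphere (0 : E) 1) : E) ≤ supportFn B ((e u : sphere (0 : E) 1) : E)) := by
    intro A B hA hAc hB hBc u
    have hTA : IsCompact (T '' A) := hAc.image hTcont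
    have hTB : IsCompact (T '' B) := hBc.image hTcont
    rw [supportFn_add' _ _ (hA.image _) hTA hLne hLcomp,
        supportFn_add' _ _ (hB.image _) hTB hLne hLcomp,
        add_le_add_iff_right,
        supportFn_image' T S hTS A, supportFn_image' T S hTS B]
    exact supportFn_le_normalize_iff A B hA hAc hB hBc (hSne u)
  have h1 : ∀ u : sphere (0 : E) 1,
      {ω | supportFn (T '' Γ ω + L) (u : E) ≤ supportFn (T '' K + L) (u : E)}
        = {ω | supportFn (Γ ω) ((e u : sphere (0 : E) 1) : E)
            ≤ supportFn K ((e u : sphere (0 : E) 1) : E)} := by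
    intro u; ext ω
    simp only [Set.mem_setOf_eq]
    exact hkey _ _ (hΓne ω) (hΓc ω) hKne hKcomp u
  have h2 : ∀ u : sphere (0 : E) 1,
      {ω | supportFn (T '' K + L) (u : E) ≤ supportFn (T '' Γ ω + L) (u : E)}
        = {ω | supportFn K ((e u : sphere (0 : E) 1) : E)
            ≤ supportFn (Γ ω) ((e u : sphere (0 : E) 1) : E)} := by
    intro u; ext ω
    simp only [Set.mem_setOf_eq]
    exact hkey _ _ hKne hKcomp (hΓne ω) (hΓc ω) u
  unfold DCT
  refine congrArg₂ min ?_ ?_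
  · rw [← hesurj.iInf_comp (fun v : sphere (0 : E) 1 =>
      (P {ω | supportFn (Γ ω) (v : E) ≤ supportFn K (v : E)}).toReal)]
    exact iInf_congr fun u => by rw [h1 u]
  · rw [← hesurj.iInf_comp (fun v : sphere (0 : E) 1 =>
      (P {ω | supportFn K (v : E) ≤ supportFn (Γ ω) (v : E)}).toReal)]
    exact iInf_congr fun u => by rw [h2 u]

end Helpers

/-- P1, affine invariance: `D_CT(M·K + L; M·Γ + L) = D_CT(K; Γ)` for every
non-singular `p×p` matrix `M` and all `K, L ∈ K_c(ℝ^p)`. -/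
theorem DCT_affine_invariance {p : ℕ} {Ω : Type*} [MeasurableSpace Ω]
    (P : Measure Ω) [IsProbabilityMeasure P]
    (Γ : Ω → NonemptyCompacts (EuclideanSpace ℝ (Fin p)))
    (hconv : ∀ ω, Convex ℝ (Γ ω : Set (EuclideanSpace ℝ (Fin p))))
    (hΓ : Measurable Γ)
    (M : Matrix (Fin p) (Fin p) ℝ) (hM : M.det ≠ 0)
    (K L : Set (EuclideanSpace ℝ (Fin p)))
    (hKne : K.Nonempty) (hKcomp : IsCompact K) (hKconv : Convex ℝ K)
    (hLne : L.Nonempty) (hLcomp : IsCompact L) (hLconv : Convex ℝ L) :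
    DCT P (fun ω => (Matrix.toEuclideanLin M) '' (Γ ω : Set (EuclideanSpace ℝ (Fin p))) + L)
        ((Matrix.toEuclideanLin M) '' K + L)
      = DCT P (fun ω => (Γ ω : Set (EuclideanSpace ℝ (Fin p)))) K := by
  have hTS : ∀ x y : EuclideanSpace ℝ (Fin p),
      (inner ℝ (Matrix.toEuclideanLin M x) y : ℝ) = inner ℝ x (Matrix.toEuclideanLin Mᴴ y) := by
    intro x y
    rw [Matrix.toEuclideanLin_conjTranspose_eq_adjoint]
    exact (LinearMap.adjoint_inner_right (Matrix.toEuclideanLin M) x y).symm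
  have hSinj : Function.Injective (Matrix.toEuclideanLin Mᴴ) := by
    have hU : IsUnit Mᴴ := (Matrix.isUnit_iff_isUnit_det _).2 (by
      rw [Matrix.det_conjTranspose]; exact isUnit_iff_ne_zero.2 (by simpa using hM))
    have hmv := Matrix.mulVec_injective_iff_isUnit.2 hU
    intro x y hxy
    have : Mᴴ *ᵥ (WithLp.equiv 2 _) x = Mᴴ *ᵥ (WithLp.equiv 2 _) y := by
      simpa [Matrix.toEuclideanLin_apply] using congrArg (WithLp.equiv 2 _) hxy
    exact (WithLp.equiv 2 _).injective (by simpa using hmv this)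
  exact DCT_map_add P (fun ω => (Γ ω : Set (EuclideanSpace ℝ (Fin p))))
    (fun ω => (Γ ω).nonempty) (fun ω => (Γ ω).isCompact)
    (Matrix.toEuclideanLin M) (Matrix.toEuclideanLin Mᴴ) hTS hSinj
    K L hKne hKcomp hLne hLcomp
end

section
/- (Maximality at the center of symmetry, P2.) Let Γ be a compact convex random set that is compact-symmetric with respect to K ∈ K_c(ℝ^p), i.e., for every u ∈ S^{p-1} the real random variable s_Γ(u) is centrally symmetric about s_K(u) (s_Γ(u) − s_K(u) and s_K(u) − s_Γ(u) are identically distributed). Then D_CT(K;Γ) = sup_{L ∈ K_c(ℝ^p)} D_CT(L;Γ). -/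
open MeasureTheory Metric Filter Topology TopologicalSpace
open scoped Pointwise ENNReal

instance {E : Type*} [MetricSpace E] : BorelSpace (NonemptyCompacts E) := ⟨rfl⟩

section Aux

variable {E : Type*} [NormedAddCommGroup E] [InnerProductSpace ℝ E]

lemma continuous_inner_right' (u : E) : Continuous fun k : E => (inner ℝ k u : ℝ) :=
  continuous_id.inner continuous_const

lemma supportFn_le_supportFn_add (C D : NonemptyCompacts E) (u : E) :
    supportFn (C : Set E) u ≤ supportFn (D : Set E) u + dist C D * ‖u‖ := by
  have hD : BddAbove ((fun k => (inner ℝ k u : ℝ)) '' (D : Set E)) :=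
    (D.isCompact.image (continuous_inner_right' u)).bddAbove
  apply csSup_le (C.nonempty.image _)
  rintro _ ⟨x, hx, rfl⟩
  have hne : EMetric.hausdorffEdist (C : Set E) (D : Set E) ≠ ⊤ :=
    hausdorffEdist_ne_top_of_nonempty_of_bounded C.nonempty D.nonempty
      C.isCompact.isBounded D.isCompact.isBounded
  have h1 : infDist x (D : Set E) ≤ hausdorffDist (C : Set E) (D : Set E) :=
    infDist_le_hausdorffDist_of_mem hx hne
  obtain ⟨d, hd, hdd⟩ := D.isCompact.exists_infDist_eq_dist D.nonempty x
  have h2 : (inner ℝ (x - d) u : ℝ) ≤ ‖x - d‖ * ‖u‖ := real_inner_le_norm _ u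
  have h3 : (inner ℝ x u : ℝ) - inner ℝ d u = inner ℝ (x - d) u := (inner_sub_left x d u).symm
  have h4 : (inner ℝ d u : ℝ) ≤ supportFn (D : Set E) u := le_csSup hD ⟨d, hd, rfl⟩
  have h5 : ‖x - d‖ ≤ dist C D := by
    rw [← dist_eq_norm, NonemptyCompacts.dist_eq]
    calc dist x d = infDist x (D : Set E) := hdd.symm
    _ ≤ _ := h1
  have h6 : ‖x - d‖ * ‖u‖ ≤ dist C D * ‖u‖ :=
    mul_le_mul_of_nonneg_right h5 (norm_nonneg u)
  linarith

lemma lipschitz_supportFn (u : E) :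
    LipschitzWith ‖u‖₊ (fun C : NonemptyCompacts E => supportFn (C : Set E) u) := by
  apply LipschitzWith.of_dist_le_mul
  intro C D
  rw [Real.dist_eq, abs_sub_le_iff]
  have hc : (‖u‖₊ : ℝ) = ‖u‖ := rfl
  constructor
  · have := supportFn_le_supportFn_add C D u
    rw [hc]; linarith [this]
  · have := supportFn_le_supportFn_add D C u
    rw [hc, dist_comm C D] at *
    linarith [this]

end Aux

/-- P2, maximality at the center of symmetry: if `Γ` is compact-symmetric
with respect to `K` (i.e. for every unit direction `u`, `s_Γ(u) - s_K(u)` and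
`s_K(u) - s_Γ(u)` are identically distributed), then `K` attains the supremum of
`D_CT(·; Γ)` over all nonempty compact convex sets. -/
theorem DCT_maximal_at_center_of_symmetry {p : ℕ} {Ω : Type*} [MeasurableSpace Ω]
    (P : Measure Ω) [IsProbabilityMeasure P]
    (Γ : Ω → NonemptyCompacts (EuclideanSpace ℝ (Fin p)))
    (hconv : ∀ ω, Convex ℝ (Γ ω : Set (EuclideanSpace ℝ (Fin p))))
    (hΓ : Measurable Γ)
    (K : Set (EuclideanSpace ℝ (Fin p)))
    (hKne : K.Nonempty) (hKcomp : IsCompact K) (hKconv : Convex ℝ K)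
    (hsym : ∀ u : EuclideanSpace ℝ (Fin p), u ∈ sphere (0 : EuclideanSpace ℝ (Fin p)) 1 →
      Measure.map (fun ω => supportFn (Γ ω : Set (EuclideanSpace ℝ (Fin p))) u - supportFn K u) P
        = Measure.map (fun ω => supportFn K u - supportFn (Γ ω : Set (EuclideanSpace ℝ (Fin p))) u) P) :
    DCT P (fun ω => (Γ ω : Set (EuclideanSpace ℝ (Fin p)))) K
      = ⨆ L : Set (EuclideanSpace ℝ (Fin p)),
          ⨆ _ : L.Nonempty ∧ IsCompact L ∧ Convex ℝ L,
            DCT P (fun ω => (Γ ω : Set (EuclideanSpace ℝ (Fin p)))) L := by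
  classical
  set G : Ω → Set (EuclideanSpace ℝ (Fin p)) := fun ω => (Γ ω : Set (EuclideanSpace ℝ (Fin p))) with hG
  -- measurability of the support function evaluated along Γ
  have hmeas : ∀ u : EuclideanSpace ℝ (Fin p), Measurable fun ω => supportFn (G ω) u := by
    intro u
    exact ((lipschitz_supportFn u).continuous.measurable).comp hΓ
  -- key: DCT of any L is at most DCT of K
  have hnonnegDCT : ∀ L : Set (EuclideanSpace ℝ (Fin p)), 0 ≤ DCT P G L := by
    intro L
    refine le_min (Real.iInf_nonneg ?_) (Real.iInf_nonneg ?_) <;>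
      exact fun _ => ENNReal.toReal_nonneg
  have hle : ∀ L : Set (EuclideanSpace ℝ (Fin p)), DCT P G L ≤ DCT P G K := by
    intro L
    rcases isEmpty_or_nonempty (sphere (0 : EuclideanSpace ℝ (Fin p)) 1) with hS | hS
    · unfold DCT
      simp only [Real.iInf_of_isEmpty]
      exact le_rfl
    · -- a u = b u by symmetry
      have hab : ∀ v : sphere (0 : EuclideanSpace ℝ (Fin p)) 1,
          P {ω | supportFn (G ω) (v : EuclideanSpace ℝ (Fin p)) ≤ supportFn K (v : EuclideanSpace ℝ (Fin p))}
            = P {ω | supportFn K (v : EuclideanSpace ℝ (Fin p)) ≤ supportFn (G ω) (v : EuclideanSpace ℝ (Fin p))} := by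
        intro v
        have hv : (v : EuclideanSpace ℝ (Fin p)) ∈ sphere (0 : EuclideanSpace ℝ (Fin p)) 1 := v.2
        have h := congrArg (fun μ : Measure ℝ => μ (Set.Iic (0:ℝ))) (hsym v hv)
        rw [Measure.map_apply (f := fun ω => supportFn (G ω) (v : EuclideanSpace ℝ (Fin p)) - supportFn K (v : EuclideanSpace ℝ (Fin p))) ((hmeas v).sub measurable_const) measurableSet_Iic,
            Measure.map_apply (f := fun ω => supportFn K (v : EuclideanSpace ℝ (Fin p)) - supportFn (G ω) (v : EuclideanSpace ℝ (Fin p))) (measurable_const.sub (hmeas v)) measurableSet_Iic] at h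
        have e1 : (fun ω => supportFn (G ω) (v : EuclideanSpace ℝ (Fin p)) - supportFn K (v : EuclideanSpace ℝ (Fin p))) ⁻¹' Set.Iic 0
            = {ω | supportFn (G ω) (v : EuclideanSpace ℝ (Fin p)) ≤ supportFn K (v : EuclideanSpace ℝ (Fin p))} := by
          ext ω; simp [sub_nonpos]
        have e2 : (fun ω => supportFn K (v : EuclideanSpace ℝ (Fin p)) - supportFn (G ω) (v : EuclideanSpace ℝ (Fin p))) ⁻¹' Set.Iic 0
            = {ω | supportFn K (v : EuclideanSpace ℝ (Fin p)) ≤ supportFn (G ω) (v : EuclideanSpace ℝ (Fin p))} := by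
          ext ω; simp [sub_nonpos]
        rw [e1, e2] at h
        exact h
      have bddB : ∀ (f : sphere (0 : EuclideanSpace ℝ (Fin p)) 1 → ℝ), (∀ v, 0 ≤ f v) → BddBelow (Set.range f) := by
        rintro f hf
        exact ⟨0, by rintro _ ⟨v, rfl⟩; exact hf v⟩
      -- DCT K equals the single infimum
      have hK : DCT P G K
          = ⨅ v : sphere (0 : EuclideanSpace ℝ (Fin p)) 1,
              (P {ω | supportFn (G ω) (v : EuclideanSpace ℝ (Fin p)) ≤ supportFn K (v : EuclideanSpace ℝ (Fin p))}).toReal := by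
        unfold DCT
        have : (⨅ v : sphere (0 : EuclideanSpace ℝ (Fin p)) 1,
              (P {ω | supportFn K (v : EuclideanSpace ℝ (Fin p)) ≤ supportFn (G ω) (v : EuclideanSpace ℝ (Fin p))}).toReal)
            = ⨅ v : sphere (0 : EuclideanSpace ℝ (Fin p)) 1,
              (P {ω | supportFn (G ω) (v : EuclideanSpace ℝ (Fin p)) ≤ supportFn K (v : EuclideanSpace ℝ (Fin p))}).toReal := by
          exact iInf_congr fun v => by rw [hab v]
        rw [this, min_self]
      rw [hK]
      apply le_ciInf
      intro v
      by_cases hLK : supportFn L (v : EuclideanSpace ℝ (Fin p)) ≤ supportFn K (v : EuclideanSpace ℝ (Fin p))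
      · calc DCT P G L
            ≤ ⨅ u : sphere (0 : EuclideanSpace ℝ (Fin p)) 1,
                (P {ω | supportFn (G ω) (u : EuclideanSpace ℝ (Fin p)) ≤ supportFn L (u : EuclideanSpace ℝ (Fin p))}).toReal :=
              min_le_left _ _
          _ ≤ (P {ω | supportFn (G ω) (v : EuclideanSpace ℝ (Fin p)) ≤ supportFn L (v : EuclideanSpace ℝ (Fin p))}).toReal :=
              ciInf_le (bddB _ fun _ => ENNReal.toReal_nonneg) v
          _ ≤ (P {ω | supportFn (G ω) (v : EuclideanSpace ℝ (Fin p)) ≤ supportFn K (v : EuclideanSpace ℝ (Fin p))}).toReal := by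
              refine ENNReal.toReal_mono (measure_ne_top P _) (measure_mono ?_)
              intro ω hω; exact le_trans hω hLK
      · push_neg at hLK
        calc DCT P G L
            ≤ ⨅ u : sphere (0 : EuclideanSpace ℝ (Fin p)) 1,
                (P {ω | supportFn L (u : EuclideanSpace ℝ (Fin p)) ≤ supportFn (G ω) (u : EuclideanSpace ℝ (Fin p))}).toReal :=
              min_le_right _ _
          _ ≤ (P {ω | supportFn L (v : EuclideanSpace ℝ (Fin p)) ≤ supportFn (G ω) (v : EuclideanSpace ℝ (Fin p))}).toReal :=
              ciInf_le (bddB _ fun _ => ENNReal.toReal_nonneg) v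
          _ ≤ (P {ω | supportFn K (v : EuclideanSpace ℝ (Fin p)) ≤ supportFn (G ω) (v : EuclideanSpace ℝ (Fin p))}).toReal := by
              refine ENNReal.toReal_mono (measure_ne_top P _) (measure_mono ?_)
              intro ω hω; exact le_trans hLK.le hω
          _ = (P {ω | supportFn (G ω) (v : EuclideanSpace ℝ (Fin p)) ≤ supportFn K (v : EuclideanSpace ℝ (Fin p))}).toReal := by
              rw [hab v]
  -- now the supremum manipulation
  set F : Set (EuclideanSpace ℝ (Fin p)) → ℝ := fun L =>
    ⨆ _ : L.Nonempty ∧ IsCompact L ∧ Convex ℝ L, DCT P G L with hF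
  have hFle : ∀ L, F L ≤ DCT P G K := by
    intro L
    by_cases hcond : L.Nonempty ∧ IsCompact L ∧ Convex ℝ L
    · rw [hF]; simp only; rw [ciSup_pos hcond]; exact hle L
    · rw [hF]; simp only
      haveI : IsEmpty (PLift (L.Nonempty ∧ IsCompact L ∧ Convex ℝ L)) :=
        ⟨fun h => hcond h.down⟩
      haveI : IsEmpty (L.Nonempty ∧ IsCompact L ∧ Convex ℝ L) := ⟨hcond⟩
      rw [Real.iSup_of_isEmpty]
      exact hnonnegDCT K
  have hbdd : BddAbove (Set.range F) := ⟨DCT P G K, by rintro _ ⟨L, rfl⟩; exact hFle L⟩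
  apply le_antisymm
  · have hKF : F K = DCT P G K := ciSup_pos ⟨hKne, hKcomp, hKconv⟩
    calc DCT P G K = F K := hKF.symm
      _ ≤ ⨆ L, F L := le_ciSup hbdd K
  · exact ciSup_le fun L => hFle L
end

section
/- (Monotonicity relative to the deepest set, P3a.) Let Γ be a compact convex random set and let K ∈ K_c(ℝ^p) maximize D_CT(·;Γ), i.e., D_CT(K;Γ) = sup_{C ∈ K_c(ℝ^p)} D_CT(C;Γ). Then for every L ∈ K_c(ℝ^p) and every λ ∈ [0,1], D_CT((1−λ)·K + λ·L; Γ) ≥ D_CT(L;Γ). -/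
open MeasureTheory Metric Filter Topology TopologicalSpace
open scoped Pointwise ENNReal

section Aux

variable {E : Type*} [NormedAddCommGroup E] [InnerProductSpace ℝ E]

/-- Support function of a Minkowski combination of compact nonempty sets. -/
lemma supportFn_combo (a b : ℝ) (ha : 0 ≤ a) (hb : 0 ≤ b)
    (K L : Set E) (hKne : K.Nonempty) (hKc : IsCompact K)
    (hLne : L.Nonempty) (hLc : IsCompact L) (u : E) :
    supportFn (a • K + b • L) u = a * supportFn K u + b * supportFn L u := by
  have hcont : Continuous fun k : E => (inner ℝ k u : ℝ) := continuous_id.inner continuous_const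
  have hlin : ∀ (c : ℝ) (S : Set E),
      (fun k : E => (inner ℝ k u : ℝ)) '' (c • S) = c • ((fun k : E => (inner ℝ k u : ℝ)) '' S) := by
    intro c S
    ext x
    simp only [Set.mem_image, Set.mem_smul_set]
    constructor
    · rintro ⟨k, ⟨s, hs, rfl⟩, rfl⟩
      exact ⟨inner ℝ s u, ⟨s, hs, rfl⟩, (real_inner_smul_left s u c).symm⟩
    · rintro ⟨y, ⟨s, hs, rfl⟩, rfl⟩
      exact ⟨c • s, ⟨s, hs, rfl⟩, real_inner_smul_left s u c⟩
  have hadd : ∀ S T : Set E,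
      (fun k : E => (inner ℝ k u : ℝ)) '' (S + T)
        = (fun k : E => (inner ℝ k u : ℝ)) '' S + (fun k : E => (inner ℝ k u : ℝ)) '' T := by
    intro S T
    ext x
    simp only [Set.mem_image, Set.mem_add]
    constructor
    · rintro ⟨k, ⟨s, hs, t, ht, rfl⟩, rfl⟩
      exact ⟨_, ⟨s, hs, rfl⟩, _, ⟨t, ht, rfl⟩, (inner_add_left s t u).symm⟩
    · rintro ⟨y, ⟨s, hs, rfl⟩, z, ⟨t, ht, rfl⟩, rfl⟩
      exact ⟨s + t, ⟨s, hs, t, ht, rfl⟩, inner_add_left s t u⟩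
  unfold supportFn
  rw [hadd, hlin, hlin]
  have hKne' : ((fun k : E => (inner ℝ k u : ℝ)) '' K).Nonempty := hKne.image _
  have hLne' : ((fun k : E => (inner ℝ k u : ℝ)) '' L).Nonempty := hLne.image _
  have hKb : BddAbove ((fun k : E => (inner ℝ k u : ℝ)) '' K) := (hKc.image hcont).bddAbove
  have hLb : BddAbove ((fun k : E => (inner ℝ k u : ℝ)) '' L) := (hLc.image hcont).bddAbove
  rw [csSup_add (hKne'.smul_set) (hKb.smul_of_nonneg ha) (hLne'.smul_set)
    (hLb.smul_of_nonneg hb), Real.sSup_smul_of_nonneg ha, Real.sSup_smul_of_nonneg hb]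
  simp [smul_eq_mul]

variable {Ω : Type*} [MeasurableSpace Ω] (P : Measure Ω) [IsProbabilityMeasure P]
  (Γ : Ω → Set E)

/-- The Tukey depth is at most one. -/
lemma DCT_le_one (C : Set E) : DCT P Γ C ≤ 1 := by
  unfold DCT
  by_cases h : Nonempty (sphere (0 : E) 1)
  · obtain ⟨u⟩ := h
    refine min_le_of_left_le ((ciInf_le ⟨0, Set.forall_mem_range.2 fun v =>
      ENNReal.toReal_nonneg⟩ u).trans ?_)
    have := ENNReal.toReal_mono (measure_ne_top P Set.univ)
      (measure_mono (Set.subset_univ {ω | supportFn (Γ ω) (u : E) ≤ supportFn C (u : E)}))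
    simpa using this
  · haveI : IsEmpty (sphere (0 : E) 1) := not_nonempty_iff.mp h
    simp [Real.iInf_of_isEmpty]

/-- Quasi-concavity style inequality: if the support function of `M` lies pointwise between
those of `K` and `L`, then the depth of `M` is at least the minimum of the depths. -/
lemma min_DCT_le (K L M : Set E)
    (h1 : ∀ u : E, min (supportFn K u) (supportFn L u) ≤ supportFn M u)
    (h2 : ∀ u : E, supportFn M u ≤ max (supportFn K u) (supportFn L u)) :
    min (DCT P Γ K) (DCT P Γ L) ≤ DCT P Γ M := by
  by_cases h : Nonempty (sphere (0 : E) 1)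
  · unfold DCT
    rw [min_min_min_comm]
    have hbdd : ∀ C : Set E, BddBelow (Set.range fun u : sphere (0 : E) 1 =>
        (P {ω | supportFn (Γ ω) (u : E) ≤ supportFn C (u : E)}).toReal) :=
      fun C => ⟨0, Set.forall_mem_range.2 fun v => ENNReal.toReal_nonneg⟩
    have hbdd' : ∀ C : Set E, BddBelow (Set.range fun u : sphere (0 : E) 1 =>
        (P {ω | supportFn C (u : E) ≤ supportFn (Γ ω) (u : E)}).toReal) :=
      fun C => ⟨0, Set.forall_mem_range.2 fun v => ENNReal.toReal_nonneg⟩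
    refine min_le_min (le_ciInf fun u => ?_) (le_ciInf fun u => ?_)
    · rcases le_total (supportFn K (u : E)) (supportFn L (u : E)) with hu | hu
      · have hKM : supportFn K (u : E) ≤ supportFn M (u : E) := by
          have := h1 (u : E); rwa [min_eq_left hu] at this
        refine (min_le_left _ _).trans ((ciInf_le (hbdd K) u).trans ?_)
        exact ENNReal.toReal_mono (measure_ne_top P _)
          (measure_mono fun ω hω => le_trans hω hKM)
      · have hLM : supportFn L (u : E) ≤ supportFn M (u : E) := by
          have := h1 (u : E); rwa [min_eq_right hu] at this
        refine (min_le_right _ _).trans ((ciInf_le (hbdd L) u).trans ?_)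
        exact ENNReal.toReal_mono (measure_ne_top P _)
          (measure_mono fun ω hω => le_trans hω hLM)
    · rcases le_total (supportFn K (u : E)) (supportFn L (u : E)) with hu | hu
      · have hML : supportFn M (u : E) ≤ supportFn L (u : E) := by
          have := h2 (u : E); rwa [max_eq_right hu] at this
        refine (min_le_right _ _).trans ((ciInf_le (hbdd' L) u).trans ?_)
        exact ENNReal.toReal_mono (measure_ne_top P _)
          (measure_mono fun ω hω => le_trans hML hω)
      · have hMK : supportFn M (u : E) ≤ supportFn K (u : E) := by
          have := h2 (u : E); rwa [max_eq_left hu] at this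
        refine (min_le_left _ _).trans ((ciInf_le (hbdd' K) u).trans ?_)
        exact ENNReal.toReal_mono (measure_ne_top P _)
          (measure_mono fun ω hω => le_trans hMK hω)
  · haveI : IsEmpty (sphere (0 : E) 1) := not_nonempty_iff.mp h
    unfold DCT
    simp [Real.iInf_of_isEmpty]

end Aux

/-- P3a, monotonicity relative to the deepest set: if `K` maximizes
`D_CT(·; Γ)` over `K_c(ℝ^p)`, then for every `L ∈ K_c(ℝ^p)` and `λ ∈ [0,1]`,
`D_CT((1-λ)·K + λ·L; Γ) ≥ D_CT(L; Γ)`. -/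
theorem DCT_monotone_deepest {p : ℕ} {Ω : Type*} [MeasurableSpace Ω]
    (P : Measure Ω) [IsProbabilityMeasure P]
    (Γ : Ω → NonemptyCompacts (EuclideanSpace ℝ (Fin p)))
    (hconv : ∀ ω, Convex ℝ (Γ ω : Set (EuclideanSpace ℝ (Fin p))))
    (hΓ : Measurable Γ)
    (K : Set (EuclideanSpace ℝ (Fin p)))
    (hKne : K.Nonempty) (hKcomp : IsCompact K) (hKconv : Convex ℝ K)
    (hKmax : DCT P (fun ω => (Γ ω : Set (EuclideanSpace ℝ (Fin p)))) K
      = ⨆ C : Set (EuclideanSpace ℝ (Fin p)),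
          ⨆ _ : C.Nonempty ∧ IsCompact C ∧ Convex ℝ C,
            DCT P (fun ω => (Γ ω : Set (EuclideanSpace ℝ (Fin p)))) C) :
    ∀ L : Set (EuclideanSpace ℝ (Fin p)), L.Nonempty → IsCompact L → Convex ℝ L →
      ∀ l : ℝ, l ∈ Set.Icc (0 : ℝ) 1 →
        DCT P (fun ω => (Γ ω : Set (EuclideanSpace ℝ (Fin p)))) ((1 - l) • K + l • L)
          ≥ DCT P (fun ω => (Γ ω : Set (EuclideanSpace ℝ (Fin p)))) L := by
  intro L hLne hLc hLconv l hl
  obtain ⟨hl0, hl1⟩ := hl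
  let E := EuclideanSpace ℝ (Fin p)
  have hs : ∀ u : E, supportFn ((1 - l) • K + l • L) u
      = (1 - l) * supportFn K u + l * supportFn L u :=
    fun u => supportFn_combo (1 - l) l (by linarith) hl0 K L hKne hKcomp hLne hLc u
  -- pointwise bounds on the support function of the combination
  have h1 : ∀ u : E, min (supportFn K u) (supportFn L u)
      ≤ supportFn ((1 - l) • K + l • L) u := by
    intro u
    rw [hs u]
    rcases le_total (supportFn K u) (supportFn L u) with h | h
    · rw [min_eq_left h]; nlinarith
    · rw [min_eq_right h]; nlinarith
  have h2 : ∀ u : E, supportFn ((1 - l) • K + l • L) u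
      ≤ max (supportFn K u) (supportFn L u) := by
    intro u
    rw [hs u]
    rcases le_total (supportFn K u) (supportFn L u) with h | h
    · rw [max_eq_right h]; nlinarith
    · rw [max_eq_left h]; nlinarith
  -- K is deepest, hence at least as deep as L
  have hKL : DCT P (fun ω => (Γ ω : Set E)) L ≤ DCT P (fun ω => (Γ ω : Set E)) K := by
    rw [hKmax]
    have hb : BddAbove (Set.range fun C : Set E =>
        ⨆ _ : C.Nonempty ∧ IsCompact C ∧ Convex ℝ C,
          DCT P (fun ω => (Γ ω : Set E)) C) := by
      refine ⟨1, ?_⟩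
      rintro x ⟨C, rfl⟩
      exact Real.iSup_le (fun _ => DCT_le_one P _ C) zero_le_one
    have hL' : DCT P (fun ω => (Γ ω : Set E)) L
        = ⨆ _ : L.Nonempty ∧ IsCompact L ∧ Convex ℝ L,
            DCT P (fun ω => (Γ ω : Set E)) L := by
      haveI : Nonempty (L.Nonempty ∧ IsCompact L ∧ Convex ℝ L) := ⟨⟨hLne, hLc, hLconv⟩⟩
      exact ciSup_const.symm
    rw [hL']
    exact le_ciSup hb L
  have hmain := min_DCT_le P (fun ω => (Γ ω : Set E)) K L ((1 - l) • K + l • L) h1 h2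
  rw [min_eq_right hKL] at hmain
  exact hmain
end

section
/- (Failure of geometric monotonicity, P3b.) Consider the probability space Ω = {ω₁, ω₂} with P(ω₁) = 3/4 and P(ω₂) = 1/4, and the compact convex random set Γ : Ω → K_c(ℝ) given by Γ(ω₁) = [1,2] and Γ(ω₂) = [2,7]. Then: (i) D_CT([1,2];Γ) = 3/4 and [1,2] maximizes D_CT(·;Γ) over K_c(ℝ); (ii) d_H([1,2],[2,7]) = 5 = d_H([1,2],[3,5]) + d_H([3,5],[2,7]); and (iii) D_CT([3,5];Γ) = 0 < 1/4 = D_CT([2,7];Γ). In particular, the Tukey depth D_CT does not satisfy monotonicity relative to the deepest point along d_H-geodesic triples. -/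
open MeasureTheory Metric Filter Topology TopologicalSpace
open scoped Pointwise ENNReal

lemma mem_one : (1:ℝ) ∈ sphere (0:ℝ) 1 := by norm_num
lemma mem_negone : (-1:ℝ) ∈ sphere (0:ℝ) 1 := by norm_num

lemma sphere_iInf (f : sphere (0:ℝ) 1 → ℝ) :
    ⨅ u, f u = min (f ⟨1, mem_one⟩) (f ⟨-1, mem_negone⟩) := by
  have hcases : ∀ u : sphere (0:ℝ) 1, u = ⟨1, mem_one⟩ ∨ u = ⟨-1, mem_negone⟩ := by
    rintro ⟨u, hu⟩
    have : |u| = 1 := by simpa [Real.dist_eq] using hu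
    rcases abs_eq (by norm_num : (0:ℝ) ≤ 1) |>.mp this with h | h
    · left; exact Subtype.ext h
    · right; exact Subtype.ext h
  have hbdd : BddBelow (Set.range f) := by
    refine ⟨min (f ⟨1, mem_one⟩) (f ⟨-1, mem_negone⟩), ?_⟩
    rintro x ⟨u, rfl⟩
    rcases hcases u with rfl | rfl
    · exact min_le_left _ _
    · exact min_le_right _ _
  apply le_antisymm
  · exact le_min (ciInf_le hbdd _) (ciInf_le hbdd _)
  · refine le_ciInf fun u => ?_
    rcases hcases u with rfl | rfl
    · exact min_le_left _ _
    · exact min_le_right _ _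

lemma supportFn_Icc_one {a b : ℝ} (h : a ≤ b) : supportFn (Set.Icc a b) 1 = b := by
  have : (fun k : ℝ => (inner ℝ k (1:ℝ) : ℝ)) '' Set.Icc a b = Set.Icc a b := by
    simp [RCLike.inner_apply]
  rw [supportFn, this, csSup_Icc h]

lemma supportFn_Icc_negone {a b : ℝ} (h : a ≤ b) : supportFn (Set.Icc a b) (-1) = -a := by
  have : (fun k : ℝ => (inner ℝ k (-1:ℝ) : ℝ)) '' Set.Icc a b = Set.Icc (-b) (-a) := by
    have : (fun k : ℝ => (inner ℝ k (-1:ℝ) : ℝ)) = fun k : ℝ => -k := by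
      funext k; simp [RCLike.inner_apply]
    rw [this]
    rw [Set.image_neg_eq_neg]; simp
  rw [supportFn, this, csSup_Icc (by linarith)]

open Classical in
lemma Pcalc (P : Measure Bool)
    (hP : P = (3/4 : ℝ≥0∞) • Measure.dirac true + (1/4 : ℝ≥0∞) • Measure.dirac false)
    (S : Set Bool) :
    (P S).toReal = (if true ∈ S then (3/4 : ℝ) else 0) + (if false ∈ S then (1/4 : ℝ) else 0) := by
  subst hP
  have e1 : ((3/4:ℝ≥0∞)).toReal = 3/4 := by rw [ENNReal.toReal_div]; norm_num
  have e2 : ((1/4:ℝ≥0∞)).toReal = 1/4 := by rw [ENNReal.toReal_div]; norm_num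
  have e3 : ((3/4:ℝ≥0∞)+1/4).toReal = 1 := by
    rw [ENNReal.toReal_add (ENNReal.div_lt_top (by norm_num) (by norm_num)).ne
      (ENNReal.div_lt_top (by norm_num) (by norm_num)).ne, e1, e2]; norm_num
  rw [Measure.add_apply, Measure.smul_apply, Measure.smul_apply,
    Measure.dirac_apply, Measure.dirac_apply, Set.indicator, Set.indicator]
  set_option linter.unnecessarySeqFocus false in
  split_ifs <;>
    simp only [Pi.one_apply, smul_eq_mul, mul_one, mul_zero, add_zero, zero_add,
      ENNReal.toReal_zero, e1, e2, e3] <;> norm_num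

lemma icc_dist_le {a b c d r : ℝ} (hcd : c ≤ d) (hr : 0 ≤ r)
    (h1 : c - a ≤ r) (h2 : b - d ≤ r) :
    ∀ x ∈ Set.Icc a b, ∃ y ∈ Set.Icc c d, dist x y ≤ r := by
  rintro x ⟨hx1, hx2⟩
  refine ⟨max c (min x d), ⟨le_max_left _ _, max_le hcd (min_le_right _ _)⟩, ?_⟩
  rw [Real.dist_eq]
  rcases le_total x c with h | h
  · rw [min_eq_left (h.trans hcd), max_eq_left h, abs_le]
    constructor <;> linarith
  · rcases le_total x d with h' | h'
    · rw [min_eq_left h', max_eq_right h]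
      simpa using hr
    · rw [min_eq_right h', max_eq_right hcd, abs_le]
      constructor <;> linarith

lemma hd_Icc_le {a b c d r : ℝ} (hab : a ≤ b) (hcd : c ≤ d) (hr : 0 ≤ r)
    (h1 : c - a ≤ r) (h2 : b - d ≤ r) (h3 : a - c ≤ r) (h4 : d - b ≤ r) :
    hausdorffDist (Set.Icc a b) (Set.Icc c d) ≤ r :=
  hausdorffDist_le_of_mem_dist hr (icc_dist_le hcd hr h1 h2) (icc_dist_le hab hr h3 h4)

lemma infDist_ge_Icc {x a b r : ℝ} (hab : a ≤ b) (h : ∀ y, a ≤ y → y ≤ b → r ≤ |x - y|) :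
    r ≤ infDist x (Set.Icc a b) := by
  haveI : Nonempty (Set.Icc a b) := ⟨⟨a, le_refl a, hab⟩⟩
  rw [infDist_eq_iInf]
  refine le_ciInf ?_
  rintro ⟨y, hy1, hy2⟩
  rw [Real.dist_eq]; exact h y hy1 hy2

lemma hd_Icc_eq {a b c d r : ℝ} (hab : a ≤ b) (hcd : c ≤ d) (hr : 0 ≤ r)
    (h1 : c - a ≤ r) (h2 : b - d ≤ r) (h3 : a - c ≤ r) (h4 : d - b ≤ r)
    (hlow : r ≤ infDist d (Set.Icc a b)) :
    hausdorffDist (Set.Icc a b) (Set.Icc c d) = r := by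
  refine le_antisymm (hd_Icc_le hab hcd hr h1 h2 h3 h4) ?_
  rw [hausdorffDist_comm]
  have hne : EMetric.hausdorffEdist (Set.Icc c d) (Set.Icc a b) ≠ ⊤ :=
    hausdorffEdist_ne_top_of_nonempty_of_bounded (Set.nonempty_Icc.mpr hcd)
      (Set.nonempty_Icc.mpr hab) (Metric.isBounded_Icc c d) (Metric.isBounded_Icc a b)
  exact hlow.trans (infDist_le_hausdorffDist_of_mem (Set.mem_Icc.mpr ⟨hcd, le_refl d⟩) hne)

lemma DCT_eval {Ω : Type*} [MeasurableSpace Ω] (P : Measure Ω) (Γ : Ω → Set ℝ) (K : Set ℝ) :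
    DCT P Γ K =
      min (min (P {ω | supportFn (Γ ω) 1 ≤ supportFn K 1}).toReal
               (P {ω | supportFn (Γ ω) (-1) ≤ supportFn K (-1)}).toReal)
          (min (P {ω | supportFn K 1 ≤ supportFn (Γ ω) 1}).toReal
               (P {ω | supportFn K (-1) ≤ supportFn (Γ ω) (-1)}).toReal) := by
  rw [DCT, sphere_iInf, sphere_iInf]

/-- failure of P3b: on `Ω = {ω₁, ω₂}` with `P(ω₁) = 3/4`, `P(ω₂) = 1/4`, and
`Γ(ω₁) = [1,2]`, `Γ(ω₂) = [2,7]` in `K_c(ℝ)`: (i) `D_CT([1,2];Γ) = 3/4` and `[1,2]`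
maximizes `D_CT(·;Γ)`; (ii) `d_H([1,2],[2,7]) = 5 = d_H([1,2],[3,5]) + d_H([3,5],[2,7])`;
(iii) `D_CT([3,5];Γ) = 0 < 1/4 = D_CT([2,7];Γ)`. -/
theorem DCT_not_geometric_monotone
    (P : Measure Bool)
    (hP : P = (3/4 : ℝ≥0∞) • Measure.dirac true + (1/4 : ℝ≥0∞) • Measure.dirac false)
    (Γ : Bool → Set ℝ)
    (hΓ : Γ = fun ω => if ω then Set.Icc (1 : ℝ) 2 else Set.Icc (2 : ℝ) 7) :
    DCT P Γ (Set.Icc (1 : ℝ) 2) = 3 / 4 ∧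
    (∀ C : Set ℝ, C.Nonempty → IsCompact C → Convex ℝ C →
      DCT P Γ C ≤ DCT P Γ (Set.Icc (1 : ℝ) 2)) ∧
    hausdorffDist (Set.Icc (1 : ℝ) 2) (Set.Icc (2 : ℝ) 7) = 5 ∧
    hausdorffDist (Set.Icc (1 : ℝ) 2) (Set.Icc (3 : ℝ) 5)
      + hausdorffDist (Set.Icc (3 : ℝ) 5) (Set.Icc (2 : ℝ) 7) = 5 ∧
    DCT P Γ (Set.Icc (3 : ℝ) 5) = 0 ∧
    DCT P Γ (Set.Icc (2 : ℝ) 7) = 1 / 4 := by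
  have hΓ1 : ∀ ω, supportFn (Γ ω) 1 = if ω then (2:ℝ) else 7 := by
    subst hΓ; intro ω
    cases ω <;> simp [supportFn_Icc_one (by norm_num : (1:ℝ) ≤ 2),
      supportFn_Icc_one (by norm_num : (2:ℝ) ≤ 7)]
  have hΓm : ∀ ω, supportFn (Γ ω) (-1) = if ω then (-1:ℝ) else -2 := by
    subst hΓ; intro ω
    cases ω <;> simp [supportFn_Icc_negone (by norm_num : (1:ℝ) ≤ 2),
      supportFn_Icc_negone (by norm_num : (2:ℝ) ≤ 7)]
  have Pc := Pcalc P hP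
  -- (i) DCT of [1,2]
  have hA : DCT P Γ (Set.Icc (1:ℝ) 2) = 3/4 := by
    rw [DCT_eval, supportFn_Icc_one (by norm_num : (1:ℝ) ≤ 2),
      supportFn_Icc_negone (by norm_num : (1:ℝ) ≤ 2)]
    simp only [hΓ1, hΓm]
    rw [Pc, Pc, Pc, Pc]
    norm_num [Set.mem_setOf_eq]
  have hC35 : DCT P Γ (Set.Icc (3:ℝ) 5) = 0 := by
    rw [DCT_eval, supportFn_Icc_one (by norm_num : (3:ℝ) ≤ 5),
      supportFn_Icc_negone (by norm_num : (3:ℝ) ≤ 5)]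
    simp only [hΓ1, hΓm]
    rw [Pc, Pc, Pc, Pc]
    norm_num [Set.mem_setOf_eq]
  have hC27 : DCT P Γ (Set.Icc (2:ℝ) 7) = 1/4 := by
    rw [DCT_eval, supportFn_Icc_one (by norm_num : (2:ℝ) ≤ 7),
      supportFn_Icc_negone (by norm_num : (2:ℝ) ≤ 7)]
    simp only [hΓ1, hΓm]
    rw [Pc, Pc, Pc, Pc]
    norm_num [Set.mem_setOf_eq]
  -- finiteness of P
  have hfin : ∀ S : Set Bool, P S ≠ ⊤ := by
    intro S
    refine ne_top_of_le_ne_top ?_ (measure_mono (Set.subset_univ S))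
    rw [hP]
    simp only [Measure.add_apply, Measure.smul_apply, Measure.dirac_apply, Set.indicator,
      Set.mem_univ, if_pos, Pi.one_apply, smul_eq_mul, mul_one]
    intro h
    exact absurd h (by

      intro hh
      have := ENNReal.add_eq_top.mp hh
      rcases this with h' | h' <;> exact absurd h' (ENNReal.div_lt_top (by norm_num) (by norm_num)).ne)
  refine ⟨hA, ?_, ?_, ?_, hC35, hC27⟩
  · -- maximality
    intro C _ _ _
    rw [hA]
    have hbdd1 : BddBelow (Set.range fun u : sphere (0:ℝ) 1 =>
        (P {ω | supportFn (Γ ω) (u:ℝ) ≤ supportFn C (u:ℝ)}).toReal) :=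
      ⟨0, by rintro x ⟨u, rfl⟩; exact ENNReal.toReal_nonneg⟩
    have hbdd2 : BddBelow (Set.range fun u : sphere (0:ℝ) 1 =>
        (P {ω | supportFn C (u:ℝ) ≤ supportFn (Γ ω) (u:ℝ)}).toReal) :=
      ⟨0, by rintro x ⟨u, rfl⟩; exact ENNReal.toReal_nonneg⟩
    rcases le_or_gt (supportFn C 1) 2 with hb | hb
    · have step : DCT P Γ C ≤ (P {ω | supportFn (Γ ω) 1 ≤ supportFn C 1}).toReal :=
        le_trans (min_le_left _ _) (ciInf_le hbdd1 ⟨1, mem_one⟩)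
      refine step.trans ?_
      have hsub : {ω | supportFn (Γ ω) 1 ≤ supportFn C 1} ⊆ {true} := by
        intro ω hω
        simp only [hΓ1, Set.mem_setOf_eq] at hω
        cases ω
        · simp at hω; linarith
        · rfl
      have := ENNReal.toReal_mono (hfin {true}) (measure_mono hsub)
      refine this.trans ?_
      rw [Pc]; norm_num
    · have step : DCT P Γ C ≤ (P {ω | supportFn C 1 ≤ supportFn (Γ ω) 1}).toReal :=
        le_trans (min_le_right _ _) (ciInf_le hbdd2 ⟨1, mem_one⟩)
      refine step.trans ?_
      have hsub : {ω | supportFn C 1 ≤ supportFn (Γ ω) 1} ⊆ {false} := by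
        intro ω hω
        simp only [hΓ1, Set.mem_setOf_eq] at hω
        cases ω
        · rfl
        · simp at hω; linarith
      have := ENNReal.toReal_mono (hfin {false}) (measure_mono hsub)
      refine this.trans ?_
      rw [Pc]; norm_num
  · -- d_H([1,2],[2,7]) = 5
    refine hd_Icc_eq (by norm_num) (by norm_num) (by norm_num) (by norm_num) (by norm_num)
      (by norm_num) (by norm_num) ?_
    refine infDist_ge_Icc (by norm_num) ?_
    intro y hy1 hy2
    calc (5:ℝ) ≤ 7 - y := by linarith
    _ ≤ |7 - y| := le_abs_self _
  · -- sum = 5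
    have h1 : hausdorffDist (Set.Icc (1:ℝ) 2) (Set.Icc (3:ℝ) 5) = 3 := by
      refine hd_Icc_eq (by norm_num) (by norm_num) (by norm_num) (by norm_num) (by norm_num)
        (by norm_num) (by norm_num) ?_
      refine infDist_ge_Icc (by norm_num) ?_
      intro y hy1 hy2
      calc (3:ℝ) ≤ 5 - y := by linarith
      _ ≤ |5 - y| := le_abs_self _
    have h2 : hausdorffDist (Set.Icc (3:ℝ) 5) (Set.Icc (2:ℝ) 7) = 2 := by
      refine hd_Icc_eq (by norm_num) (by norm_num) (by norm_num) (by norm_num) (by norm_num)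
        (by norm_num) (by norm_num) ?_
      refine infDist_ge_Icc (by norm_num) ?_
      intro y hy1 hy2
      calc (2:ℝ) ≤ 7 - y := by linarith
      _ ≤ |7 - y| := le_abs_self _
    rw [h1, h2]; norm_num
end

section
/- (Vanishing at infinity, algebraic version, P4a.) Let Γ be a compact convex random set, let K ∈ K_c(ℝ^p) maximize D_CT(·;Γ), and let L ∈ K_c(ℝ^p) with L ≠ {0}. Then lim_{n→∞} D_CT(K + n·L; Γ) = 0, where K + n·L = {k + n·l : k ∈ K, l ∈ L}. -/
open MeasureTheory Metric Filter Topology TopologicalSpace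
open scoped Pointwise ENNReal

theorem DCT_vanishing_aux {E : Type*} [NormedAddCommGroup E] [InnerProductSpace ℝ E]
    {Ω : Type*} [MeasurableSpace Ω]
    (P : Measure Ω) [IsProbabilityMeasure P]
    {Γ : Ω → NonemptyCompacts E}
    (hΓ : Measurable Γ)
    (K L : Set E)
    (hKne : K.Nonempty) (hKcomp : IsCompact K)
    (hLne : L.Nonempty) (hLcomp : IsCompact L)
    (hL : L ≠ {0}) :
    Tendsto (fun n : ℕ =>
        DCT P (fun ω => (Γ ω : Set E)) (K + (n : ℝ) • L))
      atTop (nhds 0) := by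
  classical
  obtain ⟨l, hlL, hl0⟩ : ∃ l ∈ L, l ≠ 0 := by
    by_contra h
    push_neg at h
    exact hL (Set.eq_singleton_iff_nonempty_unique_mem.2 ⟨hLne, fun x hx => h x hx⟩)
  obtain ⟨k₀, hk₀⟩ := hKne
  set u₀ : E := ‖l‖⁻¹ • l with hu₀def
  have hnl : (0:ℝ) < ‖l‖ := norm_pos_iff.2 hl0
  have hu₀norm : ‖u₀‖ = 1 := by
    rw [hu₀def, norm_smul, norm_inv, norm_norm, inv_mul_cancel₀ (ne_of_gt hnl)]
  have hu₀mem : u₀ ∈ sphere (0:E) 1 := by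
    simp [mem_sphere_iff_norm, hu₀norm]
  have hlu : (inner ℝ l u₀ : ℝ) = ‖l‖ := by
    rw [hu₀def, real_inner_smul_right, real_inner_self_eq_norm_sq]
    field_simp
  set O : NonemptyCompacts E := ⟨⟨{0}, isCompact_singleton⟩, Set.singleton_nonempty 0⟩
  set g : Ω → ℝ := fun ω => dist (Γ ω) O with hgdef
  haveI : BorelSpace (NonemptyCompacts E) := ⟨rfl⟩
  have hg : Measurable g := (continuous_id.dist continuous_const).measurable.comp hΓ
  have hsg : ∀ ω, supportFn (Γ ω : Set E) u₀ ≤ g ω := by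
    intro ω
    apply csSup_le ((Γ ω).nonempty.image _)
    rintro x ⟨k, hk, rfl⟩
    have h1 : (inner ℝ k u₀ : ℝ) ≤ ‖k‖ := by
      calc (inner ℝ k u₀ : ℝ) ≤ ‖k‖ * ‖u₀‖ := real_inner_le_norm k u₀
      _ = ‖k‖ := by rw [hu₀norm, mul_one]
    have h2 : ‖k‖ ≤ g ω := by
      have hfin : EMetric.hausdorffEdist (Γ ω : Set E) (O : Set E) ≠ ⊤ :=
        hausdorffEdist_ne_top_of_nonempty_of_bounded (Γ ω).nonempty
          (Set.singleton_nonempty 0) (Γ ω).isCompact.isBounded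
          isCompact_singleton.isBounded
      have h3 := infDist_le_hausdorffDist_of_mem hk hfin
      have h4 : infDist k (O : Set E) = ‖k‖ := by
        show infDist k ({0} : Set E) = ‖k‖
        rw [infDist_singleton, dist_zero_right]
      have h5 : g ω = hausdorffDist (Γ ω : Set E) (O : Set E) :=
        NonemptyCompacts.dist_eq
      rw [h5]
      rw [h4] at h3
      exact h3
    linarith
  set c : ℕ → ℝ := fun n => (inner ℝ k₀ u₀ : ℝ) + n * ‖l‖ with hcdef
  set s : ℕ → Set Ω := fun n => {ω | c n ≤ g ω} with hsdef
  have hsmeas : ∀ n, MeasurableSet (s n) := fun n =>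
    measurableSet_le measurable_const hg
  have hanti : Antitone s := by
    intro m n hmn ω hω
    have hc : c m ≤ c n := by
      have : (m:ℝ) * ‖l‖ ≤ (n:ℝ) * ‖l‖ :=
        mul_le_mul_of_nonneg_right (Nat.cast_le.2 hmn) (le_of_lt hnl)
      simp only [hcdef]; linarith
    exact le_trans hc hω
  have hinter : ⋂ n, s n = ∅ := by
    apply Set.eq_empty_iff_forall_notMem.2
    intro ω hω
    obtain ⟨n, hn⟩ := exists_nat_gt ((g ω - (inner ℝ k₀ u₀ : ℝ)) / ‖l‖)
    have hω' : c n ≤ g ω := Set.mem_iInter.1 hω n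
    rw [div_lt_iff₀ hnl] at hn
    simp only [hcdef] at hω'
    linarith
  have hPtend : Tendsto (fun n => (P (s n)).toReal) atTop (𝓝 0) := by
    have h1 : Tendsto (P ∘ s) atTop (𝓝 (P (⋂ n, s n))) :=
      tendsto_measure_iInter_atTop (fun n => (hsmeas n).nullMeasurableSet) hanti
        ⟨0, measure_ne_top P _⟩
    rw [hinter, measure_empty] at h1
    have := (ENNReal.tendsto_toReal (by simp : (0:ℝ≥0∞) ≠ ⊤)).comp h1
    exact (by simpa using this : Tendsto (ENNReal.toReal ∘ ⇑P ∘ s) atTop (𝓝 0))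
  refine squeeze_zero (fun n => ?_) (fun n => ?_) hPtend
  · exact le_min (Real.iInf_nonneg fun u => ENNReal.toReal_nonneg)
      (Real.iInf_nonneg fun u => ENNReal.toReal_nonneg)
  · have hbdd : BddBelow (Set.range fun u : sphere (0:E) 1 =>
        (P {ω | supportFn (K + (n:ℝ) • L) (u:E) ≤ supportFn (Γ ω : Set E) (u:E)}).toReal) := by
      refine ⟨0, ?_⟩
      rintro x ⟨u, rfl⟩
      exact ENNReal.toReal_nonneg
    have hstep : DCT P (fun ω => (Γ ω : Set E)) (K + (n:ℝ) • L) ≤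
        (P {ω | supportFn (K + (n:ℝ) • L) u₀ ≤ supportFn (Γ ω : Set E) u₀}).toReal :=
      le_trans (min_le_right _ _) (ciInf_le hbdd (⟨u₀, hu₀mem⟩ : sphere (0:E) 1))
    refine le_trans hstep ?_
    have hsub : {ω | supportFn (K + (n:ℝ) • L) u₀ ≤ supportFn (Γ ω : Set E) u₀} ⊆ s n := by
      intro ω hω
      have hmem : k₀ + (n:ℝ) • l ∈ K + (n:ℝ) • L :=
        Set.add_mem_add hk₀ (Set.smul_mem_smul_set hlL)
      have hKLcomp : IsCompact (K + (n:ℝ) • L) :=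
        hKcomp.add (hLcomp.image (continuous_const_smul _))
      have hbddA : BddAbove ((fun k => (inner ℝ k u₀ : ℝ)) '' (K + (n:ℝ) • L)) :=
        (hKLcomp.image ((continuous_id.inner continuous_const))).bddAbove
      have hle : c n ≤ supportFn (K + (n:ℝ) • L) u₀ := by
        show (inner ℝ k₀ u₀ : ℝ) + (n:ℝ) * ‖l‖
          ≤ sSup ((fun k => (inner ℝ k u₀ : ℝ)) '' (K + (n:ℝ) • L))
        have h6 : (inner ℝ (k₀ + (n:ℝ) • l) u₀ : ℝ)
            ≤ sSup ((fun k => (inner ℝ k u₀ : ℝ)) '' (K + (n:ℝ) • L)) :=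
          le_csSup hbddA ⟨k₀ + (n:ℝ) • l, hmem, rfl⟩
        rw [show (inner ℝ (k₀ + (n:ℝ) • l) u₀ : ℝ)
            = (inner ℝ k₀ u₀ : ℝ) + (n:ℝ) * (inner ℝ l u₀ : ℝ) by
          rw [inner_add_left, real_inner_smul_left]] at h6
        rw [hlu] at h6
        exact h6
      exact le_trans (le_trans hle hω) (hsg ω)
    exact ENNReal.toReal_mono (measure_ne_top P _) (measure_mono hsub)

/-- P4a, vanishing at infinity, algebraic version: if `K` maximizes
`D_CT(·;Γ)` and `L ∈ K_c(ℝ^p)` with `L ≠ {0}`, then `D_CT(K + n·L; Γ) → 0`. -/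
theorem DCT_vanishing_algebraic {p : ℕ} {Ω : Type*} [MeasurableSpace Ω]
    (P : Measure Ω) [IsProbabilityMeasure P]
    (Γ : Ω → NonemptyCompacts (EuclideanSpace ℝ (Fin p)))
    (hconv : ∀ ω, Convex ℝ (Γ ω : Set (EuclideanSpace ℝ (Fin p))))
    (hΓ : Measurable Γ)
    (K L : Set (EuclideanSpace ℝ (Fin p)))
    (hKne : K.Nonempty) (hKcomp : IsCompact K) (hKconv : Convex ℝ K)
    (hLne : L.Nonempty) (hLcomp : IsCompact L) (hLconv : Convex ℝ L)
    (hL : L ≠ {0})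
    (hKmax : DCT P (fun ω => (Γ ω : Set (EuclideanSpace ℝ (Fin p)))) K
      = ⨆ C : Set (EuclideanSpace ℝ (Fin p)),
          ⨆ _ : C.Nonempty ∧ IsCompact C ∧ Convex ℝ C,
            DCT P (fun ω => (Γ ω : Set (EuclideanSpace ℝ (Fin p)))) C) :
    Tendsto (fun n : ℕ =>
        DCT P (fun ω => (Γ ω : Set (EuclideanSpace ℝ (Fin p)))) (K + (n : ℝ) • L))
      atTop (nhds 0) := by
  exact DCT_vanishing_aux P hΓ K L hKne hKcomp hLne hLcomp hL
end

section
/- (Vanishing at infinity, geometric version, P4b.) Let Γ be a compact convex random set, let K ∈ K_c(ℝ^p) maximize D_CT(·;Γ), and let (K_n)_n be a sequence in K_c(ℝ^p) with lim_{n→∞} d_H(K, K_n) = ∞. Then lim_{n→∞} D_CT(K_n;Γ) = 0. -/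
open MeasureTheory Metric Filter Topology TopologicalSpace
open scoped Pointwise ENNReal

open scoped RealInnerProductSpace

section Aux
variable {E : Type*} [NormedAddCommGroup E] [InnerProductSpace ℝ E]

lemma le_supportFn {K : Set E} (hK : IsCompact K) {k : E} (hk : k ∈ K) (u : E) :
    (inner ℝ k u : ℝ) ≤ supportFn K u :=
  le_csSup ((hK.image (Continuous.inner continuous_id continuous_const)).bddAbove)
    ⟨k, hk, rfl⟩

lemma supportFn_le {K : Set E} (hKne : K.Nonempty) {u : E} {c : ℝ}
    (h : ∀ k ∈ K, (inner ℝ k u : ℝ) ≤ c) : supportFn K u ≤ c :=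
  csSup_le (hKne.image _) (by rintro _ ⟨k, hk, rfl⟩; exact h k hk)

lemma supportFn_le_add_hausdorff {A B : Set E} (hAne : A.Nonempty) (hAc : IsCompact A)
    (hBne : B.Nonempty) (hBc : IsCompact B) {u : E} (hu : ‖u‖ = 1) :
    supportFn A u ≤ supportFn B u + hausdorffDist A B := by
  apply supportFn_le hAne
  intro a ha
  obtain ⟨b, hb, hab⟩ := hBc.exists_infDist_eq_dist hBne a
  have hfin : EMetric.hausdorffEdist A B ≠ ⊤ :=
    hausdorffEdist_ne_top_of_nonempty_of_bounded hAne hBne hAc.isBounded hBc.isBounded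
  have h1 : infDist a B ≤ hausdorffDist A B := infDist_le_hausdorffDist_of_mem ha hfin
  have h2 : (inner ℝ (a - b) u : ℝ) ≤ dist a b := by
    calc (inner ℝ (a - b) u : ℝ) ≤ ‖a - b‖ * ‖u‖ := real_inner_le_norm _ _
    _ = dist a b := by rw [hu, mul_one, dist_eq_norm]
  have := le_supportFn hBc hb u
  have expand : (inner ℝ a u : ℝ) = inner ℝ b u + inner ℝ (a - b) u := by
    rw [inner_sub_left]; ring
  rw [expand]
  have : dist a b ≤ hausdorffDist A B := by rw [← hab]; exact h1
  linarith

/-- Far point from a convex compact set gives a separating direction. -/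
lemma exists_dir {A : Set E} [CompleteSpace E] (hAne : A.Nonempty) (hAc : IsCompact A)
    (hAconv : Convex ℝ A) {y : E} {r : ℝ} (hr : 0 < r) (h : r ≤ infDist y A) :
    ∃ u : E, ‖u‖ = 1 ∧ supportFn A u + r ≤ (inner ℝ y u : ℝ) := by
  obtain ⟨v, hv, heq⟩ := exists_norm_eq_iInf_of_complete_convex hAne
    (hAc.isClosed.isComplete) hAconv y
  have hproj : ∀ w ∈ A, (inner ℝ (y - v) (w - v) : ℝ) ≤ 0 :=
    (norm_eq_iInf_iff_real_inner_le_zero hAconv hv).mp heq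
  have hnorm : infDist y A = ‖y - v‖ := by
    rw [heq, infDist_eq_iInf]
    simp_rw [dist_eq_norm]
  have hpos : 0 < ‖y - v‖ := by rw [← hnorm]; linarith
  set w := y - v with hw
  refine ⟨‖w‖⁻¹ • w, ?_, ?_⟩
  · rw [norm_smul, norm_inv, norm_norm, inv_mul_cancel₀ hpos.ne']
  · have hsupp : supportFn A (‖w‖⁻¹ • w) ≤ (inner ℝ v (‖w‖⁻¹ • w) : ℝ) := by
      apply supportFn_le hAne
      intro k hk
      have h1 : (inner ℝ (k - v) w : ℝ) ≤ 0 := by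
        rw [real_inner_comm]; exact hproj k hk
      have h2 : (inner ℝ (k - v) (‖w‖⁻¹ • w) : ℝ) ≤ 0 := by
        rw [real_inner_smul_right]
        exact mul_nonpos_of_nonneg_of_nonpos (inv_nonneg.2 (norm_nonneg _)) h1
      have : (inner ℝ k (‖w‖⁻¹ • w) : ℝ) = inner ℝ v (‖w‖⁻¹ • w) + inner ℝ (k - v) (‖w‖⁻¹ • w) := by
        rw [inner_sub_left]; ring
      linarith
    have hyv : (inner ℝ y (‖w‖⁻¹ • w) : ℝ) = inner ℝ v (‖w‖⁻¹ • w) + ‖w‖ := by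
      have : (inner ℝ w (‖w‖⁻¹ • w) : ℝ) = ‖w‖ := by
        rw [real_inner_smul_right, real_inner_self_eq_norm_sq]
        field_simp
      have hy : y = v + w := by rw [hw]; abel
      rw [hy, inner_add_left, this]
    rw [hyv]
    have : r ≤ ‖w‖ := by rw [hnorm] at h; exact h
    linarith

/-- If the Hausdorff distance is at least `r+1 > 1`, there is a direction with support gap `r`. -/
lemma exists_gap {A B : Set E} [CompleteSpace E] (hAne : A.Nonempty) (hAc : IsCompact A)
    (hAconv : Convex ℝ A) (hBne : B.Nonempty) (hBc : IsCompact B) (hBconv : Convex ℝ B)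
    {r : ℝ} (hr : 0 < r) (hD : r + 1 ≤ hausdorffDist A B) :
    ∃ u : E, ‖u‖ = 1 ∧
      (supportFn A u + r ≤ supportFn B u ∨ supportFn B u + r ≤ supportFn A u) := by
  have hfar : (∃ y ∈ B, r ≤ infDist y A) ∨ (∃ x ∈ A, r ≤ infDist x B) := by
    by_contra hcon
    push_neg at hcon
    obtain ⟨h1, h2⟩ := hcon
    have : hausdorffDist A B ≤ r := hausdorffDist_le_of_infDist hr.le
      (fun x hx => (h2 x hx).le) (fun y hy => (h1 y hy).le)
    linarith
  rcases hfar with ⟨y, hy, hyf⟩ | ⟨x, hx, hxf⟩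
  · obtain ⟨u, hu, hsep⟩ := exists_dir hAne hAc hAconv hr hyf
    exact ⟨u, hu, Or.inl (hsep.trans (le_supportFn hBc hy u))⟩
  · obtain ⟨u, hu, hsep⟩ := exists_dir hBne hBc hBconv hr hxf
    exact ⟨u, hu, Or.inr (hsep.trans (le_supportFn hAc hx u))⟩

end Aux

/-- P4b, vanishing at infinity, geometric version: if `K` maximizes
`D_CT(·;Γ)` and `(K_n)` is a sequence in `K_c(ℝ^p)` with `d_H(K, K_n) → ∞`, then
`D_CT(K_n; Γ) → 0`. -/
theorem DCT_vanishing_geometric {p : ℕ} {Ω : Type*} [MeasurableSpace Ω]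
    (P : Measure Ω) [IsProbabilityMeasure P]
    (Γ : Ω → NonemptyCompacts (EuclideanSpace ℝ (Fin p)))
    (hconv : ∀ ω, Convex ℝ (Γ ω : Set (EuclideanSpace ℝ (Fin p))))
    (hΓ : Measurable Γ)
    (K : Set (EuclideanSpace ℝ (Fin p)))
    (hKne : K.Nonempty) (hKcomp : IsCompact K) (hKconv : Convex ℝ K)
    (hKmax : DCT P (fun ω => (Γ ω : Set (EuclideanSpace ℝ (Fin p)))) K
      = ⨆ C : Set (EuclideanSpace ℝ (Fin p)),
          ⨆ _ : C.Nonempty ∧ IsCompact C ∧ Convex ℝ C,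
            DCT P (fun ω => (Γ ω : Set (EuclideanSpace ℝ (Fin p)))) C)
    (Kn : ℕ → Set (EuclideanSpace ℝ (Fin p)))
    (hKnne : ∀ n, (Kn n).Nonempty) (hKncomp : ∀ n, IsCompact (Kn n))
    (hKnconv : ∀ n, Convex ℝ (Kn n))
    (hdiv : Tendsto (fun n => hausdorffDist K (Kn n)) atTop atTop) :
    Tendsto (fun n => DCT P (fun ω => (Γ ω : Set (EuclideanSpace ℝ (Fin p)))) (Kn n))
      atTop (nhds 0) := by
  classical
  haveI : BorelSpace (NonemptyCompacts (EuclideanSpace ℝ (Fin p))) := ⟨rfl⟩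
  set KC : NonemptyCompacts (EuclideanSpace ℝ (Fin p)) := ⟨⟨K, hKcomp⟩, hKne⟩ with hKC
  set f : Ω → ℝ := fun ω => hausdorffDist (Γ ω : Set (EuclideanSpace ℝ (Fin p))) K with hfdef
  have hfmeas : Measurable f := by
    have hfeq : f = fun ω => dist (Γ ω) KC := by
      funext ω; rw [NonemptyCompacts.dist_eq]; rfl
    rw [hfeq]
    exact (continuous_id.dist continuous_const).measurable.comp hΓ
  -- tail probabilities tend to zero
  have htail : Tendsto (fun m : ℕ => (P {ω | (m : ℝ) ≤ f ω}).toReal) atTop (𝓝 0) := by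
    have hmeas : ∀ m : ℕ, NullMeasurableSet {ω | (m : ℝ) ≤ f ω} P := fun m =>
      (measurableSet_le measurable_const hfmeas).nullMeasurableSet
    have hanti : Antitone fun m : ℕ => {ω | (m : ℝ) ≤ f ω} := by
      intro m n h ω hω
      simp only [Set.mem_setOf_eq] at hω ⊢
      exact le_trans (Nat.cast_le.mpr h : (m : ℝ) ≤ (n : ℝ)) hω
    have hempty : (⋂ m : ℕ, {ω | (m : ℝ) ≤ f ω}) = (∅ : Set Ω) := by
      ext ω
      simp only [Set.mem_iInter, Set.mem_setOf_eq, Set.mem_empty_iff_false, iff_false, not_forall,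
        not_le]
      exact exists_nat_gt (f ω)
    have h0 := tendsto_measure_iInter_atTop hmeas hanti ⟨0, measure_ne_top P _⟩
    rw [hempty, measure_empty] at h0
    have := (ENNReal.tendsto_toReal ENNReal.zero_ne_top).comp h0
    simpa [Function.comp_def] using this
  have hnonneg : ∀ n, 0 ≤ DCT P (fun ω => (Γ ω : Set (EuclideanSpace ℝ (Fin p)))) (Kn n) :=
    fun n => le_min (Real.iInf_nonneg fun u => ENNReal.toReal_nonneg)
      (Real.iInf_nonneg fun u => ENNReal.toReal_nonneg)
  -- the upper bound
  have hbound : ∀ᶠ n in atTop, DCT P (fun ω => (Γ ω : Set (EuclideanSpace ℝ (Fin p)))) (Kn n)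
      ≤ (P {ω | hausdorffDist K (Kn n) - 1 ≤ f ω}).toReal := by
    filter_upwards [hdiv.eventually_ge_atTop 2] with n hn
    set r : ℝ := hausdorffDist K (Kn n) - 1 with hrdef
    have hrpos : (0 : ℝ) < r := by simp only [hrdef]; linarith
    obtain ⟨u, hu, hcase⟩ := exists_gap hKne hKcomp hKconv (hKnne n) (hKncomp n) (hKnconv n)
      hrpos (by simp only [hrdef]; linarith)
    have husph : u ∈ sphere (0 : EuclideanSpace ℝ (Fin p)) 1 := by
      simpa [mem_sphere_zero_iff_norm] using hu
    have hbdd1 : BddBelow (Set.range fun u : sphere (0 : EuclideanSpace ℝ (Fin p)) 1 =>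
        (P {ω | supportFn (Γ ω : Set (EuclideanSpace ℝ (Fin p))) (u : EuclideanSpace ℝ (Fin p))
          ≤ supportFn (Kn n) (u : EuclideanSpace ℝ (Fin p))}).toReal) := by
      refine ⟨0, ?_⟩
      rintro x ⟨v, rfl⟩
      exact ENNReal.toReal_nonneg
    have hbdd2 : BddBelow (Set.range fun u : sphere (0 : EuclideanSpace ℝ (Fin p)) 1 =>
        (P {ω | supportFn (Kn n) (u : EuclideanSpace ℝ (Fin p))
          ≤ supportFn (Γ ω : Set (EuclideanSpace ℝ (Fin p))) (u : EuclideanSpace ℝ (Fin p))}).toReal) := by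
      refine ⟨0, ?_⟩
      rintro x ⟨v, rfl⟩
      exact ENNReal.toReal_nonneg
    rcases hcase with hgap | hgap
    · -- supportFn K u + r ≤ supportFn (Kn n) u : use the second infimum
      refine (min_le_right _ _).trans ?_
      refine le_trans (ciInf_le hbdd2 (⟨u, husph⟩ : sphere (0 : EuclideanSpace ℝ (Fin p)) 1)) ?_
      refine (ENNReal.toReal_le_toReal (measure_ne_top P _) (measure_ne_top P _)).mpr ?_
      apply measure_mono
      intro ω hω
      simp only [Set.mem_setOf_eq] at hω ⊢
      have h1 : supportFn (Γ ω : Set (EuclideanSpace ℝ (Fin p))) u ≤ supportFn K u + f ω :=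
        supportFn_le_add_hausdorff (Γ ω).nonempty (Γ ω).isCompact hKne hKcomp hu
      linarith
    · -- supportFn (Kn n) u + r ≤ supportFn K u : use the first infimum
      refine (min_le_left _ _).trans ?_
      refine le_trans (ciInf_le hbdd1 (⟨u, husph⟩ : sphere (0 : EuclideanSpace ℝ (Fin p)) 1)) ?_
      refine (ENNReal.toReal_le_toReal (measure_ne_top P _) (measure_ne_top P _)).mpr ?_
      apply measure_mono
      intro ω hω
      simp only [Set.mem_setOf_eq] at hω ⊢
      have h1 : supportFn K u ≤ supportFn (Γ ω : Set (EuclideanSpace ℝ (Fin p))) u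
          + hausdorffDist K (Γ ω : Set (EuclideanSpace ℝ (Fin p))) :=
        supportFn_le_add_hausdorff hKne hKcomp (Γ ω).nonempty (Γ ω).isCompact hu
      rw [hausdorffDist_comm] at h1
      linarith
  -- the upper bound tends to zero
  have hg : Tendsto (fun n => (P {ω | hausdorffDist K (Kn n) - 1 ≤ f ω}).toReal) atTop (𝓝 0) := by
    rw [Metric.tendsto_atTop]
    intro ε hε
    obtain ⟨M, hM⟩ := Metric.tendsto_atTop.mp htail ε hε
    obtain ⟨N, hN⟩ := eventually_atTop.mp (hdiv.eventually_ge_atTop ((M : ℝ) + 1))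
    refine ⟨N, fun n hn => ?_⟩
    have hMle := hM M le_rfl
    rw [Real.dist_eq, sub_zero, abs_of_nonneg ENNReal.toReal_nonneg] at hMle ⊢
    refine lt_of_le_of_lt ?_ hMle
    refine (ENNReal.toReal_le_toReal (measure_ne_top P _) (measure_ne_top P _)).mpr ?_
    apply measure_mono
    intro ω hω
    simp only [Set.mem_setOf_eq] at hω ⊢
    have := hN n hn
    linarith
  exact tendsto_of_tendsto_of_tendsto_of_le_of_le' tendsto_const_nhds hg
    (Eventually.of_forall hnonneg) hbound
end
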